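/- arXiv:1508.05992 — 2 statements merged into one kernel-verified Lean document; each statement's English description precedes it below -/
import Mathlib

section
/- The triple integral ∫_{-π}^{π} ∫_{-π}^{π} ∫_0^2 I(r,ψ,φ) · r dr dψ dφ equals 4, where I(r,ψ,φ) is the indicator that the unit segment S from the origin making angle ψ (counterclockwise) with the segment Q from the origin to the point at distance r, and the unit segment T from that point making angle φ (clockwise) with Q, intersect at an interior point of each. -/
open Real Set MeasureTheory intervalIntegral

/-- The unit segment `S` from the origin making angle `ψ` with the positive x-axis. -/
noncomputable def segS (ψ : ℝ) : Set (ℝ × ℝ) :=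
  segment ℝ (0, 0) (Real.cos ψ, Real.sin ψ)

/-- The unit segment `T` from `(r,0)` making angle `φ` measured clockwise from the
segment `Q` from the origin to `(r,0)`, i.e. in direction angle `π - φ`. -/
noncomputable def segT (r φ : ℝ) : Set (ℝ × ℝ) :=
  segment ℝ (r, 0) (r + Real.cos (Real.pi - φ), Real.sin (Real.pi - φ))

open Classical in
/-- Indicator that `S` and `T` intersect at a point interior to both segments. -/
noncomputable def I (r ψ φ : ℝ) : ℝ :=
  if ∃ p : ℝ × ℝ, p ∈ openSegment ℝ ((0 : ℝ), (0 : ℝ)) (Real.cos ψ, Real.sin ψ) ∧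
      p ∈ openSegment ℝ ((r : ℝ), (0 : ℝ)) (r + Real.cos (Real.pi - φ), Real.sin (Real.pi - φ))
  then 1 else 0


/-!
The segments meet at interior points exactly when the triangle on the base `Q` with base
angles `ψ` and `φ` exists and its two other sides, `r sin φ / sin (ψ + φ)` and
`r sin ψ / sin (ψ + φ)` by the law of sines, are shorter than `1`. So for `0 < φ < π` the
segments meet iff `0 < ψ < π - φ` and `r < sin (ψ + φ) / max (sin ψ) (sin φ) ≤ 2`, and the
`r`-integral is half the square of this radius. Reflection in `Q`, `(ψ, φ) ↦ (-ψ, -φ)`, makes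
the `φ`-integrand even. The maximum is `sin φ` for `ψ ≤ φ` and `sin ψ` beyond, which makes the
`ψ`-integral elementary up to the term `(x - sin x cos x) / (4 sin² x)`, whose antiderivative
`-(x cot x) / 4` extends continuously to `x = 0`.
-/

def SegmentsMeet (r ψ φ : ℝ) : Prop :=
  ∃ p : ℝ × ℝ, p ∈ openSegment ℝ ((0 : ℝ), (0 : ℝ)) (cos ψ, sin ψ) ∧
    p ∈ openSegment ℝ ((r : ℝ), (0 : ℝ)) (r + cos (π - φ), sin (π - φ))

open Classical in
theorem I_eq_ite (r ψ φ : ℝ) : I r ψ φ = if SegmentsMeet r ψ φ then 1 else 0 := rfl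

section SegmentsMeet

variable {r ψ φ : ℝ}

theorem segmentsMeet_iff_exists_params :
    SegmentsMeet r ψ φ ↔ ∃ t ∈ Ioo (0 : ℝ) 1, ∃ s ∈ Ioo (0 : ℝ) 1,
      t * cos ψ + s * cos φ = r ∧ t * sin ψ = s * sin φ := by
  simp only [SegmentsMeet, openSegment_eq_image, cos_pi_sub, sin_pi_sub]
  constructor
  · rintro ⟨p, ⟨t, ht, rfl⟩, s, hs, hp⟩
    simp only [Prod.ext_iff, Prod.smul_mk, Prod.mk_add_mk, smul_eq_mul] at hp
    exact ⟨t, ht, s, hs, by linarith, by linarith⟩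
  · rintro ⟨t, ht, s, hs, h₁, h₂⟩
    refine ⟨_, ⟨t, ht, rfl⟩, s, hs, ?_⟩
    simp only [Prod.ext_iff, Prod.smul_mk, Prod.mk_add_mk, smul_eq_mul]
    constructor <;> linarith

theorem mul_sin_add_of_params {t s : ℝ} (h₁ : t * cos ψ + s * cos φ = r)
    (h₂ : t * sin ψ = s * sin φ) :
    t * sin (ψ + φ) = r * sin φ ∧ s * sin (ψ + φ) = r * sin ψ := by
  rw [sin_add]
  constructor
  · linear_combination cos φ * h₂ + sin φ * h₁
  · linear_combination -cos ψ * h₂ + sin ψ * h₁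

theorem segmentsMeet_neg_iff : SegmentsMeet r (-ψ) (-φ) ↔ SegmentsMeet r ψ φ := by
  simp only [segmentsMeet_iff_exists_params, cos_neg, sin_neg, mul_neg, neg_inj]

theorem segmentsMeet_iff (hD : sin (ψ + φ) ≠ 0) :
    SegmentsMeet r ψ φ ↔
      r * sin φ / sin (ψ + φ) ∈ Ioo (0 : ℝ) 1 ∧ r * sin ψ / sin (ψ + φ) ∈ Ioo (0 : ℝ) 1 := by
  rw [segmentsMeet_iff_exists_params]
  constructor
  · rintro ⟨t, ht, s, hs, h₁, h₂⟩
    obtain ⟨ht', hs'⟩ := mul_sin_add_of_params h₁ h₂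
    rw [← ht', ← hs', mul_div_cancel_right₀ _ hD, mul_div_cancel_right₀ _ hD]
    exact ⟨ht, hs⟩
  · rintro ⟨ht, hs⟩
    refine ⟨_, ht, _, hs, ?_, by field_simp⟩
    field_simp
    rw [sin_add]
    ring

theorem not_segmentsMeet_of_sin_neg (hψ : sin ψ < 0) (hφ : 0 < sin φ) :
    ¬ SegmentsMeet r ψ φ := by
  rw [segmentsMeet_iff_exists_params]
  rintro ⟨t, ht, s, hs, -, h⟩
  linarith [mul_neg_of_pos_of_neg ht.1 hψ, mul_pos hs.1 hφ]

theorem not_segmentsMeet_of_sin_add_neg (hr : 0 ≤ r) (hφ : 0 < sin φ)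
    (hD : sin (ψ + φ) < 0) : ¬ SegmentsMeet r ψ φ := by
  rw [segmentsMeet_iff_exists_params]
  rintro ⟨t, ht, s, -, h₁, h₂⟩
  nlinarith [(mul_sin_add_of_params h₁ h₂).1, mul_neg_of_pos_of_neg ht.1 hD, mul_nonneg hr hφ.le]

end SegmentsMeet

theorem I_neg (r ψ φ : ℝ) : I r (-ψ) (-φ) = I r ψ φ := by
  classical
  rw [I_eq_ite, I_eq_ite]
  exact if_congr segmentsMeet_neg_iff rfl rfl

theorem intervalIntegral_eq_of_eqOn_Ioo {f g : ℝ → ℝ} {a b c d : ℝ} (hab : a ≤ b)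
    (hbc : b ≤ c) (hcd : c ≤ d) (hg : IntervalIntegrable g volume b c)
    (h₁ : EqOn f 0 (Ioo a b)) (h₂ : EqOn f g (Ioo b c)) (h₃ : EqOn f 0 (Ioo c d)) :
    ∫ x in a..d, f x = ∫ x in b..c, g x := by
  rw [← uIoo_of_le hab] at h₁
  rw [← uIoo_of_le hbc] at h₂
  rw [← uIoo_of_le hcd] at h₃
  have i₁ : IntervalIntegrable f volume a b := intervalIntegrable_const.congr_uIoo h₁.symm
  have i₂ : IntervalIntegrable f volume b c := hg.congr_uIoo h₂.symm
  have i₃ : IntervalIntegrable f volume c d := intervalIntegrable_const.congr_uIoo h₃.symm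
  rw [← integral_add_adjacent_intervals (i₁.trans i₂) i₃,
    ← integral_add_adjacent_intervals i₁ i₂,
    integral_congr_uIoo h₁, integral_congr_uIoo h₂, integral_congr_uIoo h₃]
  simp

theorem integral_eq_two_mul_of_even {f : ℝ → ℝ} {a : ℝ} (hf : ∀ x, f (-x) = f x)
    (hi : IntervalIntegrable f volume 0 a) :
    ∫ x in (-a)..a, f x = 2 * ∫ x in (0 : ℝ)..a, f x := by
  have hi' : IntervalIntegrable f volume (-a) 0 := by
    simpa [hf] using hi.symm.comp_sub_left 0
  rw [← integral_add_adjacent_intervals hi' hi, two_mul]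
  congr 1
  simpa [hf] using (integral_comp_neg (a := 0) (b := a) f).symm

noncomputable def radialIntegral (ψ φ : ℝ) : ℝ := ∫ r in (0 : ℝ)..2, I r ψ φ * r

noncomputable def meetRadius (ψ φ : ℝ) : ℝ := sin (ψ + φ) / max (sin ψ) (sin φ)

section PositiveSines

variable {ψ φ : ℝ}

theorem segmentsMeet_iff_mem_Ioo {r : ℝ} (hψ : 0 < sin ψ) (hφ : 0 < sin φ)
    (hD : 0 < sin (ψ + φ)) : SegmentsMeet r ψ φ ↔ r ∈ Ioo 0 (meetRadius ψ φ) := by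
  rw [segmentsMeet_iff hD.ne']
  simp only [mem_Ioo, div_pos_iff_of_pos_right hD, div_lt_one hD, meetRadius,
    lt_div_iff₀ (lt_max_of_lt_right hφ)]
  constructor
  · rintro ⟨⟨hr, h₁⟩, -, h₂⟩
    have hr : 0 < r := pos_of_mul_pos_left hr hφ.le
    exact ⟨hr, by rw [mul_max_of_nonneg _ _ hr.le]; exact max_lt h₂ h₁⟩
  · rintro ⟨hr, h⟩
    rw [mul_max_of_nonneg _ _ hr.le, max_lt_iff] at h
    exact ⟨⟨mul_pos hr hφ, h.2⟩, mul_pos hr hψ, h.1⟩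

theorem meetRadius_le_two (hψ : 0 < sin ψ) (hφ : 0 < sin φ) : meetRadius ψ φ ≤ 2 := by
  rw [meetRadius, div_le_iff₀ (lt_max_of_lt_right hφ), sin_add]
  nlinarith [cos_le_one ψ, cos_le_one φ, le_max_left (sin ψ) (sin φ),
    le_max_right (sin ψ) (sin φ)]

theorem radialIntegral_of_sin_pos (hψ : 0 < sin ψ) (hφ : 0 < sin φ) (hD : 0 < sin (ψ + φ)) :
    radialIntegral ψ φ = meetRadius ψ φ ^ 2 / 2 := by
  have hR : 0 < meetRadius ψ φ := div_pos hD (lt_max_of_lt_right hφ)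
  rw [radialIntegral, intervalIntegral_eq_of_eqOn_Ioo le_rfl hR.le (meetRadius_le_two hψ hφ)
    (g := id) intervalIntegrable_id]
  · simp [integral_id]
  · simp
  · intro r hr
    simp [I_eq_ite, (segmentsMeet_iff_mem_Ioo hψ hφ hD).2 hr]
  · intro r hr
    simp [I_eq_ite, segmentsMeet_iff_mem_Ioo hψ hφ hD, hr.1.le.not_gt]

end PositiveSines

theorem radialIntegral_eq_zero {ψ φ : ℝ} (h : ∀ r, 0 ≤ r → ¬ SegmentsMeet r ψ φ) :
    radialIntegral ψ φ = 0 := by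
  rw [radialIntegral, integral_congr (g := fun _ => 0), intervalIntegral.integral_zero]
  intro r hr
  rw [uIcc_of_le zero_le_two] at hr
  simp [I_eq_ite, h r hr.1]

theorem radialIntegral_neg (ψ φ : ℝ) : radialIntegral (-ψ) (-φ) = radialIntegral ψ φ := by
  simp only [radialIntegral, I_neg]

noncomputable def angularIntegral (φ : ℝ) : ℝ := ∫ ψ in (-π)..π, radialIntegral ψ φ

theorem angularIntegral_neg (φ : ℝ) : angularIntegral (-φ) = angularIntegral φ := by
  have h : ∀ ψ, radialIntegral ψ (-φ) = radialIntegral (-ψ) φ := fun ψ => by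
    rw [← radialIntegral_neg, neg_neg]
  simp only [angularIntegral, h, integral_comp_neg (fun ψ => radialIntegral ψ φ), neg_neg]

theorem intervalIntegrable_meetRadius_sq {φ : ℝ} (hφ : 0 < sin φ) (a b : ℝ) :
    IntervalIntegrable (fun ψ => meetRadius ψ φ ^ 2 / 2) volume a b := by
  refine Continuous.intervalIntegrable ?_ a b
  unfold meetRadius
  fun_prop (disch := exact fun _ => (lt_max_of_lt_right hφ).ne')

theorem angularIntegral_eq_integral_meetRadius {φ : ℝ} (hφ₀ : 0 < φ) (hφπ : φ < π) :
    angularIntegral φ = ∫ ψ in (0 : ℝ)..(π - φ), meetRadius ψ φ ^ 2 / 2 := by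
  have hφ : 0 < sin φ := sin_pos_of_pos_of_lt_pi hφ₀ hφπ
  refine intervalIntegral_eq_of_eqOn_Ioo (by linarith [pi_pos]) (by linarith) (by linarith)
    (intervalIntegrable_meetRadius_sq hφ _ _) (fun ψ hψ => ?_) (fun ψ hψ => ?_) fun ψ hψ => ?_
  · exact radialIntegral_eq_zero fun r _ =>
      not_segmentsMeet_of_sin_neg (sin_neg_of_neg_of_neg_pi_lt hψ.2 hψ.1) hφ
  · exact radialIntegral_of_sin_pos (sin_pos_of_pos_of_lt_pi hψ.1 (by linarith [hψ.2]))
      hφ (sin_pos_of_pos_of_lt_pi (by linarith [hψ.1]) (by linarith [hψ.2]))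
  · have hD : sin (ψ + φ) < 0 := by
      rw [← neg_neg (sin _), ← sin_sub_pi, neg_neg_iff_pos]
      exact sin_pos_of_pos_of_lt_pi (by linarith [hψ.1]) (by linarith [hψ.2])
    exact radialIntegral_eq_zero fun r hr => not_segmentsMeet_of_sin_add_neg hr hφ hD

theorem sin_le_sin_of_le_of_add_le_pi {x y : ℝ} (hx : 0 ≤ x) (hxy : x ≤ y) (hsum : x + y ≤ π) :
    sin x ≤ sin y := by
  rw [← sub_nonneg, sin_sub_sin]
  have h₁ : 0 ≤ sin ((y - x) / 2) :=
    sin_nonneg_of_nonneg_of_le_pi (by linarith) (by linarith [pi_pos])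
  have h₂ : 0 ≤ cos ((y + x) / 2) := cos_nonneg_of_mem_Icc ⟨by linarith [pi_pos], by linarith⟩
  positivity

theorem meetRadius_of_le {ψ φ : ℝ} (hψ : 0 ≤ ψ) (hψφ : ψ ≤ φ) (hsum : ψ + φ ≤ π) :
    meetRadius ψ φ = sin (ψ + φ) / sin φ := by
  rw [meetRadius, max_eq_right (sin_le_sin_of_le_of_add_le_pi hψ hψφ hsum)]

theorem meetRadius_of_ge {ψ φ : ℝ} (hφ : 0 ≤ φ) (hφψ : φ ≤ ψ) (hsum : ψ + φ ≤ π) :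
    meetRadius ψ φ = sin (ψ + φ) / sin ψ := by
  rw [meetRadius, max_eq_left (sin_le_sin_of_le_of_add_le_pi hφ hφψ (by linarith))]

theorem integral_sin_add_div_sq (a b φ : ℝ) :
    ∫ ψ in a..b, (sin (ψ + φ) / sin φ) ^ 2 / 2 =
      (sin (a + φ) * cos (a + φ) - sin (b + φ) * cos (b + φ) + b - a) / (4 * sin φ ^ 2) := by
  have h : ∀ ψ, (sin (ψ + φ) / sin φ) ^ 2 / 2 = sin (ψ + φ) ^ 2 / (2 * sin φ ^ 2) := fun ψ => by
    rw [div_pow, div_div, mul_comm]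
  simp only [h, intervalIntegral.integral_div, integral_comp_add_right (fun x => sin x ^ 2),
    integral_sin_sq]
  ring

theorem integral_sin_add_div_sin_sq {φ : ℝ} (hφ₀ : 0 < φ) (hφ : φ ≤ π / 2) :
    ∫ ψ in φ..(π - φ), (sin (ψ + φ) / sin ψ) ^ 2 / 2 =
      (sin (2 * φ) + (π - 2 * φ) * cos (2 * φ)) / 2 := by
  have hle : φ ≤ π - φ := by linarith
  have hsin : ∀ ψ ∈ uIcc φ (π - φ), 0 < sin ψ := fun ψ hψ => by
    rw [uIcc_of_le hle] at hψ
    exact sin_pos_of_pos_of_lt_pi (by linarith [hψ.1]) (by linarith [hψ.2])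
  have hcont : ContinuousOn (fun ψ => (sin (ψ + φ) / sin ψ) ^ 2 / 2) (uIcc φ (π - φ)) :=
    (((continuous_sin.comp (continuous_add_const φ)).continuousOn.div continuous_sin.continuousOn
      fun ψ hψ => (hsin ψ hψ).ne').pow 2).div_const 2
  -- `(sin (ψ + φ) / sin ψ) ^ 2 = cos² φ + 2 sin φ cos φ cot ψ + sin² φ cot² ψ`
  have hderiv : ∀ ψ ∈ uIcc φ (π - φ), HasDerivAt
      (fun ψ => (cos φ ^ 2 * ψ + 2 * sin φ * cos φ * log (sin ψ)
        - sin φ ^ 2 * (cos ψ / sin ψ + ψ)) / 2) ((sin (ψ + φ) / sin ψ) ^ 2 / 2) ψ := by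
    intro ψ hψ
    have hs := (hsin ψ hψ).ne'
    refine (((((hasDerivAt_id ψ).const_mul (cos φ ^ 2)).add
      (((hasDerivAt_sin ψ).log hs).const_mul (2 * sin φ * cos φ))).sub
      ((((hasDerivAt_cos ψ).div (hasDerivAt_sin ψ) hs).add (hasDerivAt_id ψ)).const_mul
        (sin φ ^ 2))).div_const 2).congr_deriv ?_
    rw [sin_add]
    field_simp
    ring
  have hs := (hsin φ left_mem_uIcc).ne'
  rw [integral_eq_sub_of_hasDerivAt hderiv hcont.intervalIntegrable, sin_pi_sub, cos_pi_sub,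
    sin_two_mul, cos_two_mul, cos_sq']
  field_simp
  ring

noncomputable def segmentTerm (x : ℝ) : ℝ := (x - sin x * cos x) / (4 * sin x ^ 2)

theorem angularIntegral_of_le_pi_div_two {φ : ℝ} (hφ₀ : 0 < φ) (hφ : φ ≤ π / 2) :
    angularIntegral φ = segmentTerm φ + (sin (2 * φ) + (π - 2 * φ) * cos (2 * φ) / 2) := by
  have hφπ : φ < π := by linarith [pi_pos]
  have hsin : 0 < sin φ := sin_pos_of_pos_of_lt_pi hφ₀ hφπ
  have hint := intervalIntegrable_meetRadius_sq hsin
  rw [angularIntegral_eq_integral_meetRadius hφ₀ hφπ,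
    ← integral_add_adjacent_intervals (hint 0 φ) (hint φ (π - φ)),
    integral_congr (g := fun ψ => (sin (ψ + φ) / sin φ) ^ 2 / 2), integral_sin_add_div_sq,
    integral_congr (g := fun ψ => (sin (ψ + φ) / sin ψ) ^ 2 / 2),
    integral_sin_add_div_sin_sq hφ₀ hφ]
  · rw [segmentTerm, zero_add, ← two_mul, sin_two_mul, cos_two_mul]
    field_simp
    linear_combination (-8 * sin φ * cos φ) * sin_sq_add_cos_sq φ
  · intro ψ hψ
    rw [uIcc_of_le (by linarith)] at hψ
    simp only [meetRadius_of_ge hφ₀.le hψ.1 (by linarith [hψ.2])]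
  · intro ψ hψ
    rw [uIcc_of_le hφ₀.le] at hψ
    simp only [meetRadius_of_le hψ.1 hψ.2 (by linarith [hψ.2])]

theorem angularIntegral_of_pi_div_two_le {φ : ℝ} (hφ : π / 2 ≤ φ) (hφπ : φ < π) :
    angularIntegral φ = segmentTerm (π - φ) := by
  have hφ₀ : 0 < φ := by linarith [pi_pos]
  rw [angularIntegral_eq_integral_meetRadius hφ₀ hφπ,
    integral_congr (g := fun ψ => (sin (ψ + φ) / sin φ) ^ 2 / 2), integral_sin_add_div_sq,
    segmentTerm, sin_pi_sub, cos_pi_sub, sub_add_cancel, sin_pi, cos_pi, zero_add]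
  · ring
  · intro ψ hψ
    rw [uIcc_of_le (by linarith)] at hψ
    simp only [meetRadius_of_le hψ.1 (by linarith [hψ.2]) (by linarith [hψ.2])]

theorem segmentTerm_nonneg {x : ℝ} (hx : 0 ≤ x) : 0 ≤ segmentTerm x := by
  have : sin x * cos x ≤ x := by
    have := sin_le (by linarith : 0 ≤ 2 * x)
    rw [sin_two_mul] at this
    linarith
  exact div_nonneg (by linarith) (by positivity)

theorem hasDerivAt_neg_cos_div_sinc {x : ℝ} (hx₀ : 0 < x) (hxπ : x < π) :
    HasDerivAt (fun y => -(cos y / sinc y) / 4) (segmentTerm x) x := by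
  have hs := (sin_pos_of_pos_of_lt_pi hx₀ hxπ).ne'
  have heq : (fun y => -(y * cos y / sin y) / 4) =ᶠ[nhds x] fun y => -(cos y / sinc y) / 4 := by
    filter_upwards [isOpen_ne.mem_nhds hx₀.ne'] with y hy
    rw [sinc_of_ne_zero hy, div_div_eq_mul_div, mul_comm]
  refine (((((hasDerivAt_id x).mul (hasDerivAt_cos x)).div (hasDerivAt_sin x) hs).neg.div_const
    4).congr_of_eventuallyEq heq.symm).congr_deriv ?_
  simp only [segmentTerm, Pi.mul_apply, id]
  field_simp
  linear_combination x * sin_sq_add_cos_sq x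

theorem continuousOn_neg_cos_div_sinc :
    ContinuousOn (fun y => -(cos y / sinc y) / 4) (Icc 0 (π / 2)) := by
  refine ((continuous_cos.continuousOn.div continuous_sinc.continuousOn
    fun y hy => ?_).neg).div_const 4
  rcases hy.1.eq_or_lt with rfl | hy₀
  · simp
  · rw [sinc_of_ne_zero hy₀.ne']
    exact (div_pos (sin_pos_of_pos_of_lt_pi hy₀ (by linarith [hy.2, pi_pos])) hy₀).ne'

theorem intervalIntegrable_segmentTerm : IntervalIntegrable segmentTerm volume 0 (π / 2) := by
  have hle : (0 : ℝ) ≤ π / 2 := by positivity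
  refine intervalIntegrable_deriv_of_nonneg
    (by rw [uIcc_of_le hle]; exact continuousOn_neg_cos_div_sinc) (fun x hx => ?_)
    fun x hx => ?_ <;> rw [min_eq_left hle, max_eq_right hle] at hx
  · exact hasDerivAt_neg_cos_div_sinc hx.1 (by linarith [hx.2, pi_pos])
  · exact segmentTerm_nonneg hx.1.le

theorem integral_segmentTerm : ∫ x in (0 : ℝ)..(π / 2), segmentTerm x = 1 / 4 := by
  rw [integral_eq_sub_of_hasDerivAt_of_le (by positivity) continuousOn_neg_cos_div_sinc
    (fun x hx => hasDerivAt_neg_cos_div_sinc hx.1 (by linarith [hx.2, pi_pos]))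
    intervalIntegrable_segmentTerm]
  norm_num

theorem integral_sin_two_mul_add_mul_cos_two_mul :
    ∫ x in (0 : ℝ)..(π / 2), (sin (2 * x) + (π - 2 * x) * cos (2 * x) / 2) = 3 / 2 := by
  have hderiv : ∀ x ∈ uIcc 0 (π / 2),
      HasDerivAt (fun x => (π - 2 * x) * sin (2 * x) / 4 - 3 * cos (2 * x) / 4)
        (sin (2 * x) + (π - 2 * x) * cos (2 * x) / 2) x := by
    intro x _
    have h2 : HasDerivAt (fun x : ℝ => 2 * x) 2 x := by simpa using (hasDerivAt_id x).const_mul 2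
    refine ((((h2.const_sub π).mul ((hasDerivAt_sin _).comp x h2)).div_const 4).sub
      (((hasDerivAt_cos _).comp x h2).const_mul 3 |>.div_const 4)).congr_deriv ?_
    simp only [Function.comp_apply]
    ring
  rw [integral_eq_sub_of_hasDerivAt hderiv ((by fun_prop : Continuous _).intervalIntegrable _ _)]
  norm_num [mul_div_cancel₀]

theorem triple_integral_eq_four :
    (∫ φ in (-Real.pi)..Real.pi, ∫ ψ in (-Real.pi)..Real.pi, ∫ r in (0:ℝ)..2,
      I r ψ φ * r) = 4 := by
  have hrest : IntervalIntegrable (fun φ => sin (2 * φ) + (π - 2 * φ) * cos (2 * φ) / 2)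
      volume 0 (π / 2) := (by fun_prop : Continuous _).intervalIntegrable _ _
  have h₁ : EqOn angularIntegral
      (fun φ => segmentTerm φ + (sin (2 * φ) + (π - 2 * φ) * cos (2 * φ) / 2))
      (uIoo 0 (π / 2)) := fun φ hφ => by
    rw [uIoo_of_le (by positivity)] at hφ
    exact angularIntegral_of_le_pi_div_two hφ.1 hφ.2.le
  have h₂ : EqOn angularIntegral (fun φ => segmentTerm (π - φ)) (uIoo (π / 2) π) :=
    fun φ hφ => by
      rw [uIoo_of_le (by linarith [pi_pos])] at hφ
      exact angularIntegral_of_pi_div_two_le hφ.1.le hφ.2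
  have i₁ : IntervalIntegrable angularIntegral volume 0 (π / 2) :=
    (intervalIntegrable_segmentTerm.add hrest).congr_uIoo h₁.symm
  have i₂ : IntervalIntegrable angularIntegral volume (π / 2) π :=
    IntervalIntegrable.congr_uIoo (by simpa [sub_half] using
      (intervalIntegrable_segmentTerm.comp_sub_left π).symm) h₂.symm
  change ∫ φ in (-π)..π, angularIntegral φ = 4
  rw [integral_eq_two_mul_of_even angularIntegral_neg (i₁.trans i₂),
    ← integral_add_adjacent_intervals i₁ i₂, integral_congr_uIoo h₁, integral_congr_uIoo h₂,
    integral_add intervalIntegrable_segmentTerm hrest, integral_comp_sub_left,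
    integral_segmentTerm, integral_sin_two_mul_add_mul_cos_two_mul]
  norm_num [sub_half, integral_segmentTerm]
end

section
/- For 0 < ψ < π/2, the integral ∫_ψ^{π-ψ} sin²(φ+ψ)·csc²(φ) dφ equals (π − 2ψ)·cos(2ψ) + sin(2ψ). -/
/-!
Expanding `sin (φ + ψ) = sin φ cos ψ + cos φ sin ψ` and using `cot² = csc² - 1`, the integrand is
`cos 2ψ + sin 2ψ · cot φ + sin² ψ · csc² φ`, with primitive
`cos 2ψ · φ + sin 2ψ · log (sin φ) - sin² ψ · cot φ`. The symmetry `φ ↦ π - φ` of the interval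
cancels the logarithms and doubles the cotangent term into `sin 2ψ`.
-/

open Real intervalIntegral

theorem hasDerivAt_cos_div_sin {x : ℝ} (hx : sin x ≠ 0) :
    HasDerivAt (fun y => cos y / sin y) (-(1 / sin x ^ 2)) x :=
  ((hasDerivAt_cos x).div (hasDerivAt_sin x) hx).congr_deriv <| by
    field_simp
    linear_combination -sin_sq_add_cos_sq x

theorem sin_add_sq_mul_inv_sin_sq {φ : ℝ} (ψ : ℝ) (hφ : sin φ ≠ 0) :
    sin (φ + ψ) ^ 2 * (1 / sin φ) ^ 2
      = cos (2 * ψ) + sin (2 * ψ) * (cos φ / sin φ) + sin ψ ^ 2 * (1 / sin φ ^ 2) := by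
  rw [sin_add, cos_two_mul', sin_two_mul]
  field_simp
  linear_combination sin ψ ^ 2 * cos_sq' φ

noncomputable def sinAddSqDivSinSqPrimitive (ψ φ : ℝ) : ℝ :=
  cos (2 * ψ) * φ + sin (2 * ψ) * log (sin φ) - sin ψ ^ 2 * (cos φ / sin φ)

theorem hasDerivAt_sinAddSqDivSinSqPrimitive {φ : ℝ} (ψ : ℝ) (hφ : sin φ ≠ 0) :
    HasDerivAt (sinAddSqDivSinSqPrimitive ψ) (sin (φ + ψ) ^ 2 * (1 / sin φ) ^ 2) φ := by
  rw [sin_add_sq_mul_inv_sin_sq ψ hφ]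
  exact (((hasDerivAt_id φ).const_mul _).add (((hasDerivAt_sin φ).log hφ).const_mul _)).sub
    ((hasDerivAt_cos_div_sin hφ).const_mul _) |>.congr_deriv (by ring)

theorem integral_sin_add_sq_mul_inv_sin_sq {a b : ℝ} (ψ : ℝ) (h : ∀ φ ∈ Set.uIcc a b, sin φ ≠ 0) :
    ∫ φ in a..b, sin (φ + ψ) ^ 2 * (1 / sin φ) ^ 2
      = sinAddSqDivSinSqPrimitive ψ b - sinAddSqDivSinSqPrimitive ψ a := by
  refine integral_eq_sub_of_hasDerivAt
    (fun φ hφ => hasDerivAt_sinAddSqDivSinSqPrimitive ψ (h φ hφ)) ?_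
  refine ContinuousOn.intervalIntegrable ?_
  exact (continuous_sin.comp (continuous_add_const ψ)).continuousOn.pow 2 |>.mul
    ((continuousOn_const.div continuous_sin.continuousOn h).pow 2)

theorem sinAddSqDivSinSqPrimitive_pi_sub_sub (ψ : ℝ) :
    sinAddSqDivSinSqPrimitive ψ (π - ψ) - sinAddSqDivSinSqPrimitive ψ ψ
      = (π - 2 * ψ) * cos (2 * ψ) + sin (2 * ψ) := by
  simp only [sinAddSqDivSinSqPrimitive, sin_pi_sub, cos_pi_sub]
  rcases eq_or_ne (sin ψ) 0 with hψ | hψ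
  · simp only [hψ, sin_two_mul]
    ring
  · rw [sin_two_mul]
    field_simp
    ring

theorem inner_integral (ψ : ℝ) (hψ₀ : 0 < ψ) (hψ₁ : ψ < Real.pi / 2) :
    (∫ φ in ψ..(Real.pi - ψ), Real.sin (φ + ψ) ^ 2 * (1 / Real.sin φ) ^ 2)
      = (Real.pi - 2 * ψ) * Real.cos (2 * ψ) + Real.sin (2 * ψ) := by
  have hsin : ∀ φ ∈ Set.uIcc ψ (π - ψ), sin φ ≠ 0 := by
    intro φ hφ
    rw [Set.uIcc_of_le (by linarith)] at hφ
    exact (sin_pos_of_pos_of_lt_pi (by linarith [hφ.1]) (by linarith [hφ.2])).ne'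
  rw [integral_sin_add_sq_mul_inv_sin_sq ψ hsin, sinAddSqDivSinSqPrimitive_pi_sub_sub]
end
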